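/- (Correctness of the shift-along-morphism operator.) Let c be a nested graph condition over a graph C, let p' : C ↪ C' be an injective morphism, and let Shift(p', c) denote the condition over C' obtained by the shift construction. Then for every injective morphism p : C' ↪ G into any graph G, p ⊨ Shift(p', c) if and only if p ∘ p' ⊨ c. -/

import Mathlib

/-- A directed multigraph: vertices, edges, source and target maps. -/
structure MGraph where
  V : Type
  E : Type
  s : E → V
  t : E → V

/-- A graph morphism: maps on vertices and edges commuting with source/target. -/
structure Hom (G H : MGraph) where
  fV : G.V → H.V
  fE : G.E → H.E
  src : ∀ e, fV (G.s e) = H.s (fE e)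
  tgt : ∀ e, fV (G.t e) = H.t (fE e)

def Hom.id (G : MGraph) : Hom G G :=
  ⟨_root_.id, _root_.id, fun _ => rfl, fun _ => rfl⟩

def Hom.comp {G H K : MGraph} (g : Hom H K) (f : Hom G H) : Hom G K where
  fV := g.fV ∘ f.fV
  fE := g.fE ∘ f.fE
  src := fun e => by simp only [Function.comp_apply, f.src e, g.src (f.fE e)]
  tgt := fun e => by simp only [Function.comp_apply, f.tgt e, g.tgt (f.fE e)]

/-- A graph morphism is injective if both components are injective. -/
def Hom.Injective {G H : MGraph} (f : Hom G H) : Prop :=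
  Function.Injective f.fV ∧ Function.Injective f.fE

/-- Two morphisms into a common codomain are jointly surjective if every
vertex and every edge of the codomain is in the image of one of them. -/
def JointlySurjective {G H K : MGraph} (i : Hom G K) (j : Hom H K) : Prop :=
  (∀ v : K.V, (∃ x, i.fV x = v) ∨ (∃ y, j.fV y = v)) ∧
  (∀ e : K.E, (∃ x, i.fE x = e) ∨ (∃ y, j.fE y = e))

/-- A graph morphism is an isomorphism if it has a two-sided inverse. -/
def IsIso {G H : MGraph} (f : Hom G H) : Prop :=
  ∃ g : Hom H G, g.comp f = Hom.id G ∧ f.comp g = Hom.id H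
/-- Nested graph conditions over a graph, with an (index-typed) disjunction. -/
inductive Cond : MGraph → Type 2 where
  | tru (P : MGraph) : Cond P
  | ex {P Q : MGraph} (e : Hom P Q) (d : Cond Q) : Cond P
  | or {P : MGraph} (c₁ c₂ : Cond P) : Cond P
  | not {P : MGraph} (c : Cond P) : Cond P
  | orI {P : MGraph} {ι : Type 1} (f : ι → Cond P) : Cond P

/-- Satisfaction of a nested condition by an (injective) morphism. -/
def Sat : {P G : MGraph} → Hom P G → Cond P → Prop
  | _, _, _, .tru _ => True
  | _, _, p, .ex e d => ∃ q, q.Injective ∧ p = q.comp e ∧ Sat q d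
  | _, _, p, .or c₁ c₂ => Sat p c₁ ∨ Sat p c₂
  | _, _, p, .not c => ¬ Sat p c
  | _, _, p, .orI f => ∃ i, Sat p (f i)

/-- Index data for the disjunction in the shift construction: an overlap
`(e' : C' ↪ QL, i_Q : Q ↪ QL)` of `C'` and `Q` (jointly surjective injective
morphisms) with `e' ∘ i = i_Q ∘ e`. -/
structure OverlapIdx {C C' Q : MGraph} (i : Hom C C') (e : Hom C Q) : Type 1 where
  QL : MGraph
  e' : Hom C' QL
  iQ : Hom Q QL
  inj_e' : e'.Injective
  inj_iQ : iQ.Injective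
  js : JointlySurjective e' iQ
  comm : e'.comp i = iQ.comp e

/-- The shift of a condition over `C` along a morphism `i : C ↪ C'`. -/
def Shift : {C C' : MGraph} → Hom C C' → Cond C → Cond C'
  | _, _, _, .tru _ => .tru _
  | _, _, i, .ex e d => .orI (ι := OverlapIdx i e) fun o => .ex o.e' (Shift o.iQ d)
  | _, _, i, .or c₁ c₂ => .or (Shift i c₁) (Shift i c₂)
  | _, _, i, .not c => .not (Shift i c)
  | _, _, i, .orI f => .orI fun j => Shift i (f j)

lemma Hom.ext' {G H : MGraph} {f g : Hom G H} (h1 : f.fV = g.fV) (h2 : f.fE = g.fE) :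
    f = g := by
  cases f; cases g; simp_all

lemma Hom.comp_assoc {G H K L : MGraph} (h : Hom K L) (g : Hom H K) (f : Hom G H) :
    (h.comp g).comp f = h.comp (g.comp f) :=
  Hom.ext' rfl rfl

lemma Hom.comp_inj {G H K : MGraph} {g : Hom H K} {f : Hom G H}
    (hg : g.Injective) (hf : f.Injective) : (g.comp f).Injective :=
  ⟨hg.1.comp hf.1, hg.2.comp hf.2⟩

/-- The "union of images" subgraph of `G` for two morphisms into `G`. -/
def imgGraph {C' Q G : MGraph} (p : Hom C' G) (q : Hom Q G) : MGraph where
  V := {v : G.V // (∃ x, p.fV x = v) ∨ ∃ y, q.fV y = v}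
  E := {e : G.E // (∃ x, p.fE x = e) ∨ ∃ y, q.fE y = e}
  s e := ⟨G.s e.1, by
    rcases e.2 with ⟨x, hx⟩ | ⟨y, hy⟩
    · exact Or.inl ⟨C'.s x, by rw [p.src, hx]⟩
    · exact Or.inr ⟨Q.s y, by rw [q.src, hy]⟩⟩
  t e := ⟨G.t e.1, by
    rcases e.2 with ⟨x, hx⟩ | ⟨y, hy⟩
    · exact Or.inl ⟨C'.t x, by rw [p.tgt, hx]⟩
    · exact Or.inr ⟨Q.t y, by rw [q.tgt, hy]⟩⟩

def imgIncl {C' Q G : MGraph} (p : Hom C' G) (q : Hom Q G) : Hom (imgGraph p q) G :=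
  ⟨Subtype.val, Subtype.val, fun _ => rfl, fun _ => rfl⟩

def imgLeft {C' Q G : MGraph} (p : Hom C' G) (q : Hom Q G) : Hom C' (imgGraph p q) where
  fV v := ⟨p.fV v, Or.inl ⟨v, rfl⟩⟩
  fE e := ⟨p.fE e, Or.inl ⟨e, rfl⟩⟩
  src e := Subtype.ext (p.src e)
  tgt e := Subtype.ext (p.tgt e)

def imgRight {C' Q G : MGraph} (p : Hom C' G) (q : Hom Q G) : Hom Q (imgGraph p q) where
  fV v := ⟨q.fV v, Or.inr ⟨v, rfl⟩⟩
  fE e := ⟨q.fE e, Or.inr ⟨e, rfl⟩⟩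
  src e := Subtype.ext (q.src e)
  tgt e := Subtype.ext (q.tgt e)

theorem shift_correct : ∀ {C : MGraph} (c : Cond C) {C' G : MGraph}
    (p' : Hom C C') (p : Hom C' G), p.Injective →
    (Sat p (Shift p' c) ↔ Sat (p.comp p') c) := by
  intro C c
  induction c with
  | tru P => intro C' G p' p hp; simp [Shift, Sat]
  | ex e d ih =>
    intro C' G p' p hp
    constructor
    · rintro ⟨o, q', hq', hpe, hsat⟩
      refine ⟨q'.comp o.iQ, Hom.comp_inj hq' o.inj_iQ, ?_, (ih o.iQ q' hq').mp hsat⟩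
      rw [hpe, Hom.comp_assoc, o.comm, ← Hom.comp_assoc]
    · rintro ⟨q, hq, hpe, hsat⟩
      refine ⟨⟨imgGraph p q, imgLeft p q, imgRight p q, ?_, ?_, ?_, ?_⟩, ?_⟩
      · exact ⟨fun a b h => hp.1 (congrArg Subtype.val h),
          fun a b h => hp.2 (congrArg Subtype.val h)⟩
      · exact ⟨fun a b h => hq.1 (congrArg Subtype.val h),
          fun a b h => hq.2 (congrArg Subtype.val h)⟩
      · exact ⟨fun v => v.2.imp (fun ⟨x, hx⟩ => ⟨x, Subtype.ext hx⟩)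
            (fun ⟨y, hy⟩ => ⟨y, Subtype.ext hy⟩),
          fun e => e.2.imp (fun ⟨x, hx⟩ => ⟨x, Subtype.ext hx⟩)
            (fun ⟨y, hy⟩ => ⟨y, Subtype.ext hy⟩)⟩
      · exact Hom.ext'
          (funext fun v => Subtype.ext (congrFun (congrArg Hom.fV hpe) v))
          (funext fun e => Subtype.ext (congrFun (congrArg Hom.fE hpe) e))
      · have h2 : (imgIncl p q).comp (imgRight p q) = q := Hom.ext' rfl rfl
        have hinj : (imgIncl p q).Injective :=
          ⟨fun _ _ h => Subtype.ext h, fun _ _ h => Subtype.ext h⟩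
        exact ⟨imgIncl p q, hinj, Hom.ext' rfl rfl,
          (ih (imgRight p q) (imgIncl p q) hinj).mpr (h2 ▸ hsat)⟩
  | or c₁ c₂ ih₁ ih₂ =>
    intro C' G p' p hp
    simp only [Shift, Sat, ih₁ p' p hp, ih₂ p' p hp]
  | not c ih =>
    intro C' G p' p hp
    simp only [Shift, Sat, ih p' p hp]
  | orI f ih =>
    intro C' G p' p hp
    simp only [Shift, Sat]
    exact exists_congr fun j => ih j p' p hp

/-- Correctness of the shift-along-morphism operator: for every injective
`p : C' ↪ G`, `p ⊨ Shift(p', c)` iff `p ∘ p' ⊨ c`. -/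
theorem stmt_11 (C C' G : MGraph) (c : Cond C) (p' : Hom C C') (hp' : p'.Injective)
    (p : Hom C' G) (hp : p.Injective) :
    Sat p (Shift p' c) ↔ Sat (p.comp p') c := shift_correct c p' p hp
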